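/- Let φₙ(t) = exp(−n²π·exp(2t))·(8π²n⁴·exp(4.5t) − 12πn²·exp(2.5t)) for n ≥ 1 and t ≥ 0. Then for every z ∈ ℂ and every N ≥ 1, the integral ∫₀^∞ cos(zt)·φₙ(t) dt converges absolutely and equals 2π²n⁴·G(z/2; n²π, 9/4) − 3πn²·G(z/2; n²π, 5/4), where G(z; a, b) = Γ(b+iz, a)/a^{b+iz} + Γ(b−iz, a)/a^{b−iz}. -/

import Mathlib

open MeasureTheory Complex Real

/-- Upper incomplete gamma function `Γ(s, a) = ∫ₐ^∞ e^{−t} t^{s−1} dt`. -/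
noncomputable def incGamma (s : ℂ) (a : ℝ) : ℂ :=
  ∫ t in Set.Ioi a, Real.exp (-t) * (t : ℂ) ^ (s - 1)

/-- The hyperbolic gamma function `G(z; a, b)`. -/
noncomputable def hypGamma (z : ℂ) (a b : ℝ) : ℂ :=
  incGamma ((b : ℂ) + Complex.I * z) a / (a : ℂ) ^ ((b : ℂ) + Complex.I * z) +
  incGamma ((b : ℂ) - Complex.I * z) a / (a : ℂ) ^ ((b : ℂ) - Complex.I * z)

/-- The `n`-th term of Riemann's kernel. -/
noncomputable def phiTerm (n : ℕ) (t : ℝ) : ℝ :=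
  Real.exp (-(n ^ 2) * π * Real.exp (2 * t)) *
    (8 * π ^ 2 * n ^ 4 * Real.exp (4.5 * t) - 12 * π * n ^ 2 * Real.exp (2.5 * t))

/-!
Writing `cos (z t) = (e^{i z t} + e^{-i z t}) / 2` and `a = n²π`, the integrand becomes a
combination of the functions `e^{2 w t} e^{-a e^{2t}}` with `w = b ± i z / 2`, `b ∈ {9/4, 5/4}`.
The substitution `u = a e^{2t}` maps `(0, ∞)` onto `(a, ∞)` and turns the integral of
`e^{2 w t} e^{-a e^{2t}}` into `a^{-w} / 2 · ∫_a^∞ e^{-u} u^{w-1} du = Γ(w, a) / (2 a^w)`;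
since `a > 0` the incomplete Gamma integrand is integrable for every complex `w`.
-/

open Set Filter Asymptotics

lemma integrableOn_exp_neg_mul_cpow_Ioi {a : ℝ} (ha : 0 < a) (w : ℂ) :
    IntegrableOn (fun u : ℝ => (Real.exp (-u) : ℂ) * (u : ℂ) ^ (w - 1)) (Ioi a) := by
  have hcont : ContinuousOn (fun u : ℝ => (Real.exp (-u) : ℂ) * (u : ℂ) ^ (w - 1)) (Ici a) :=
    fun u hu => ((by fun_prop : Continuous fun u : ℝ => (Real.exp (-u) : ℂ)).continuousAt.mul
      (continuousAt_ofReal_cpow_const u _ (Or.inr (ha.trans_le hu).ne'))).continuousWithinAt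
  have hdecay : (fun u : ℝ => (Real.exp (-u) : ℂ) * (u : ℂ) ^ (w - 1)) =O[atTop]
      fun u => Real.exp (-(1 / 2) * u) := by
    refine IsBigO.of_norm_left <| (Real.Gamma_integrand_isLittleO (w.re - 1)).isBigO.congr'
      ?_ EventuallyEq.rfl
    filter_upwards [eventually_gt_atTop 0] with u hu
    rw [norm_mul, norm_real, norm_of_nonneg (Real.exp_pos _).le,
      norm_cpow_eq_rpow_re_of_pos hu, sub_re, one_re]
  exact ((hcont.locallyIntegrableOn measurableSet_Ici).integrableOn_of_isBigO_atTop hdecay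
    ⟨Ioi 0, Ioi_mem_atTop 0, exp_neg_integrableOn_Ioi 0 one_half_pos⟩).mono_set
    Ioi_subset_Ici_self

lemma ofReal_mul_exp_cpow {a : ℝ} (ha : 0 ≤ a) (x : ℝ) (s : ℂ) :
    ((a * Real.exp x : ℝ) : ℂ) ^ s = (a : ℂ) ^ s * Complex.exp (s * x) := by
  rw [ofReal_mul, mul_cpow_ofReal_nonneg ha (Real.exp_pos x).le,
    cpow_def_of_ne_zero (ofReal_ne_zero.2 (Real.exp_pos x).ne'), ← ofReal_log (Real.exp_pos x).le,
    Real.log_exp, mul_comm (x : ℂ)]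

section ExpSubstitution

variable {a c : ℝ}

lemma strictMono_const_mul_exp_const_mul (ha : 0 < a) (hc : 0 < c) :
    StrictMono fun t => a * Real.exp (c * t) :=
  fun _ _ h => mul_lt_mul_of_pos_left (Real.exp_lt_exp.2 (mul_lt_mul_of_pos_left h hc)) ha

lemma hasDerivAt_const_mul_exp_const_mul (a c t : ℝ) :
    HasDerivAt (fun t => a * Real.exp (c * t)) (a * (Real.exp (c * t) * c)) t := by
  simpa using (((hasDerivAt_id t).const_mul c).exp).const_mul a

lemma image_const_mul_exp_const_mul_Ioi_zero (ha : 0 < a) (hc : 0 < c) :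
    (fun t => a * Real.exp (c * t)) '' Ioi 0 = Ioi a := by
  have : (fun t => a * Real.exp (c * t)) = (a * ·) ∘ Real.exp ∘ (c * ·) := rfl
  rw [this, image_comp, image_comp, image_mul_left_Ioi hc, mul_zero, Real.image_exp_Ioi,
    Real.exp_zero, image_mul_left_Ioi ha, mul_one]

lemma const_mul_cpow_ne_zero (ha : 0 < a) (hc : 0 < c) (w : ℂ) : (c * (a : ℂ) ^ w) ≠ 0 := by
  simp [cpow_eq_zero_iff, ha.ne', hc.ne']

lemma abs_deriv_smul_gamma_integrand (ha : 0 < a) (hc : 0 < c) (w : ℂ) (t : ℝ) :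
    |a * (Real.exp (c * t) * c)| •
        ((Real.exp (-(a * Real.exp (c * t))) : ℂ) *
          ((a * Real.exp (c * t) : ℝ) : ℂ) ^ (w - 1)) =
      (c * (a : ℂ) ^ w) * (Complex.exp (c * w * t) * Real.exp (-(a * Real.exp (c * t)))) := by
  have ha' : (a : ℂ) ≠ 0 := ofReal_ne_zero.2 ha.ne'
  rw [abs_of_pos (by positivity), real_smul, ofReal_mul_exp_cpow ha.le,
    show (a : ℂ) ^ w = (a : ℂ) ^ (w - 1) * a by
      rw [cpow_sub _ _ ha', cpow_one, div_mul_cancel₀ _ ha'],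
    show Complex.exp (c * w * t) = Complex.exp ((w - 1) * (c * t : ℝ)) * Real.exp (c * t) by
      rw [ofReal_exp, ← Complex.exp_add]; push_cast; ring_nf]
  push_cast
  ring

theorem integrableOn_exp_mul_exp_neg_exp (ha : 0 < a) (hc : 0 < c) (w : ℂ) :
    IntegrableOn (fun t : ℝ => Complex.exp (c * w * t) * Real.exp (-(a * Real.exp (c * t))))
      (Ioi 0) := by
  have hint := integrableOn_exp_neg_mul_cpow_Ioi ha w
  rw [← image_const_mul_exp_const_mul_Ioi_zero ha hc,
    integrableOn_image_iff_integrableOn_abs_deriv_smul measurableSet_Ioi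
      (fun t _ => (hasDerivAt_const_mul_exp_const_mul a c t).hasDerivWithinAt)
      (strictMono_const_mul_exp_const_mul ha hc).injective.injOn] at hint
  simp_rw [abs_deriv_smul_gamma_integrand ha hc] at hint
  exact IntegrableOn.congr_fun (Integrable.const_mul hint (c * (a : ℂ) ^ w)⁻¹)
    (fun t _ => inv_mul_cancel_left₀ (const_mul_cpow_ne_zero ha hc w) _) measurableSet_Ioi

theorem integral_exp_mul_exp_neg_exp (ha : 0 < a) (hc : 0 < c) (w : ℂ) :
    ∫ t in Ioi (0 : ℝ), Complex.exp (c * w * t) * Real.exp (-(a * Real.exp (c * t))) =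
      incGamma w a / (c * (a : ℂ) ^ w) := by
  rw [eq_div_iff (const_mul_cpow_ne_zero ha hc w), mul_comm, ← integral_const_mul, incGamma,
    ← image_const_mul_exp_const_mul_Ioi_zero ha hc,
    integral_image_eq_integral_abs_deriv_smul measurableSet_Ioi
      (fun t _ => (hasDerivAt_const_mul_exp_const_mul a c t).hasDerivWithinAt)
      (strictMono_const_mul_exp_const_mul ha hc).injective.injOn]
  simp_rw [abs_deriv_smul_gamma_integrand ha hc]

end ExpSubstitution

noncomputable def hypGammaKernel (a b t : ℝ) : ℝ :=
  Real.exp (2 * b * t) * Real.exp (-(a * Real.exp (2 * t)))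

lemma cos_mul_hypGammaKernel (a b : ℝ) (z : ℂ) (t : ℝ) :
    Complex.cos (z * t) * hypGammaKernel a b t =
      (Complex.exp ((2 : ℝ) * (b + I * (z / 2)) * t) * Real.exp (-(a * Real.exp (2 * t))) +
        Complex.exp ((2 : ℝ) * (b - I * (z / 2)) * t) * Real.exp (-(a * Real.exp (2 * t)))) /
        2 := by
  rw [Complex.cos, hypGammaKernel, ofReal_mul, ofReal_exp (2 * b * t),
    show Complex.exp ((2 : ℝ) * (b + I * (z / 2)) * t) =
      Complex.exp (z * t * I) * Complex.exp ((2 * b * t : ℝ)) by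
        rw [← Complex.exp_add]; push_cast; ring_nf,
    show Complex.exp ((2 : ℝ) * (b - I * (z / 2)) * t) =
      Complex.exp (-(z * t) * I) * Complex.exp ((2 * b * t : ℝ)) by
        rw [← Complex.exp_add]; push_cast; ring_nf]
  ring

theorem integrableOn_cos_mul_hypGammaKernel {a : ℝ} (ha : 0 < a) (b : ℝ) (z : ℂ) :
    IntegrableOn (fun t : ℝ => Complex.cos (z * t) * hypGammaKernel a b t) (Ioi 0) := by
  simp_rw [cos_mul_hypGammaKernel]
  exact ((integrableOn_exp_mul_exp_neg_exp ha two_pos _).add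
    (integrableOn_exp_mul_exp_neg_exp ha two_pos _)).div_const 2

theorem integral_cos_mul_hypGammaKernel {a : ℝ} (ha : 0 < a) (b : ℝ) (z : ℂ) :
    ∫ t in Ioi (0 : ℝ), Complex.cos (z * t) * hypGammaKernel a b t =
      hypGamma (z / 2) a b / 4 := by
  simp_rw [cos_mul_hypGammaKernel]
  rw [integral_div, integral_add (integrableOn_exp_mul_exp_neg_exp ha two_pos _)
    (integrableOn_exp_mul_exp_neg_exp ha two_pos _), integral_exp_mul_exp_neg_exp ha two_pos,
    integral_exp_mul_exp_neg_exp ha two_pos, hypGamma]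
  push_cast
  ring

lemma phiTerm_eq (n : ℕ) (t : ℝ) :
    phiTerm n t = 8 * π ^ 2 * n ^ 4 * hypGammaKernel (n ^ 2 * π) (9 / 4) t -
      12 * π * n ^ 2 * hypGammaKernel (n ^ 2 * π) (5 / 4) t := by
  rw [phiTerm, hypGammaKernel, hypGammaKernel]
  ring_nf

theorem stmt_13 (n : ℕ) (hn : 1 ≤ n) (z : ℂ) :
    IntegrableOn (fun t : ℝ => Complex.cos (z * t) * (phiTerm n t : ℂ)) (Set.Ioi 0) ∧
    (∫ t in Set.Ioi (0 : ℝ), Complex.cos (z * t) * (phiTerm n t : ℂ)) =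
      2 * (π : ℂ) ^ 2 * (n : ℂ) ^ 4 * hypGamma (z / 2) ((n : ℝ) ^ 2 * π) (9 / 4) -
      3 * (π : ℂ) * (n : ℂ) ^ 2 * hypGamma (z / 2) ((n : ℝ) ^ 2 * π) (5 / 4) := by
  have ha : 0 < (n : ℝ) ^ 2 * π := mul_pos (pow_pos (Nat.cast_pos.2 hn) 2) pi_pos
  have hint (b : ℝ) := integrableOn_cos_mul_hypGammaKernel ha b z
  have hsplit : (fun t : ℝ => Complex.cos (z * t) * (phiTerm n t : ℂ)) = fun t : ℝ =>
      8 * π ^ 2 * n ^ 4 * (Complex.cos (z * t) * hypGammaKernel (n ^ 2 * π) (9 / 4) t) -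
        12 * π * n ^ 2 * (Complex.cos (z * t) * hypGammaKernel (n ^ 2 * π) (5 / 4) t) := by
    ext t
    rw [phiTerm_eq]
    push_cast
    ring
  rw [hsplit]
  refine ⟨((hint _).const_mul _).sub ((hint _).const_mul _), ?_⟩
  rw [integral_sub ((hint _).const_mul _) ((hint _).const_mul _), integral_const_mul,
    integral_const_mul, integral_cos_mul_hypGammaKernel ha, integral_cos_mul_hypGammaKernel ha]
  ring
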